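/- Let α > 0, ε > 0 and 0 < s₁ < s₂ < d, and let h_ε^{-1} : ℝ → ℝ be the inverse of h_ε(γ) = γ·exp((γ² − α²)/(2ε)). Suppose C₁ ∈ (s₁²/2, d²/2) satisfies ∫_{s₁}^d h_ε^{-1}(C₁ − t²/2) dt = 0 and C₂ ∈ (s₂²/2, d²/2) satisfies ∫_{s₂}^d h_ε^{-1}(C₂ − t²/2) dt = 0. Then C₁ < C₂; that is, the constant C_ε(s) is strictly increasing as a function of the left endpoint s ∈ [c, d) of the support. -/

import Mathlib

/-!
Inverting `h_ε` preserves order, so `g := h_ε⁻¹` is a continuous, strictly increasing function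
vanishing at `0`. If `C₂ ≤ C₁`, then on `[s₂, d]` the integrand for `C₁` dominates the one for
`C₂`, whose integral vanishes, while on `(s₁, s₂)` the argument `C₁ - t²/2` is positive; hence
`∫_{s₁}^d g(C₁ - t²/2) > 0`, a contradiction.
-/

open Real Set intervalIntegral

lemma hasDerivAt_mul_exp_sq_sub_div (a ε γ : ℝ) :
    HasDerivAt (fun γ ↦ γ * exp ((γ ^ 2 - a) / (2 * ε)))
      (exp ((γ ^ 2 - a) / (2 * ε)) * (1 + γ ^ 2 / ε)) γ := by
  have hexponent : HasDerivAt (fun γ ↦ (γ ^ 2 - a) / (2 * ε)) (γ / ε) γ := by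
    refine (((hasDerivAt_pow 2 γ).sub_const a).div_const (2 * ε)).congr_deriv ?_
    rw [Nat.cast_ofNat, pow_one, mul_div_mul_left _ _ two_ne_zero]
  refine ((hasDerivAt_id γ).mul hexponent.exp).congr_deriv ?_
  rw [id, one_mul]
  ring

lemma strictMono_mul_exp_sq_sub_div (a : ℝ) {ε : ℝ} (hε : 0 < ε) :
    StrictMono (fun γ ↦ γ * exp ((γ ^ 2 - a) / (2 * ε))) :=
  strictMono_of_hasDerivAt_pos (hasDerivAt_mul_exp_sq_sub_div a ε) fun γ ↦ by positivity

section

variable {g : ℝ → ℝ}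

lemma intervalIntegrable_comp_sub_sq_half (hgc : Continuous g) (C a b : ℝ) :
    IntervalIntegrable (fun t ↦ g (C - t ^ 2 / 2)) MeasureTheory.volume a b :=
  (hgc.comp (by fun_prop : Continuous fun t : ℝ ↦ C - t ^ 2 / 2)).intervalIntegrable a b

lemma integral_comp_sub_sq_half_pos (hg : StrictMono g) (hgc : Continuous g) (hg0 : g 0 = 0)
    {a b C : ℝ} (ha : 0 ≤ a) (hab : a < b) (hC : b ^ 2 / 2 ≤ C) :
    0 < ∫ t in a..b, g (C - t ^ 2 / 2) := by
  refine intervalIntegral_pos_of_pos_on (intervalIntegrable_comp_sub_sq_half hgc C a b)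
    (fun t ht ↦ ?_) hab
  have ht_sq : t ^ 2 < b ^ 2 := by nlinarith [ht.1, ht.2]
  simpa [hg0] using hg (show 0 < C - t ^ 2 / 2 by linarith)

lemma integral_comp_sub_sq_half_mono (hg : Monotone g) (hgc : Continuous g)
    {a b C C' : ℝ} (hab : a ≤ b) (hCC' : C ≤ C') :
    ∫ t in a..b, g (C - t ^ 2 / 2) ≤ ∫ t in a..b, g (C' - t ^ 2 / 2) :=
  integral_mono_on hab (intervalIntegrable_comp_sub_sq_half hgc C a b)
    (intervalIntegrable_comp_sub_sq_half hgc C' a b) fun t _ ↦ hg (by linarith)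

theorem lt_of_integral_comp_sub_sq_half_eq_zero (hg : StrictMono g) (hgc : Continuous g)
    (hg0 : g 0 = 0) {s₁ s₂ d C₁ C₂ : ℝ} (hs₁ : 0 ≤ s₁) (hs₁s₂ : s₁ < s₂) (hs₂d : s₂ ≤ d)
    (hC₂ : s₂ ^ 2 / 2 ≤ C₂) (h₁ : ∫ t in s₁..d, g (C₁ - t ^ 2 / 2) = 0)
    (h₂ : ∫ t in s₂..d, g (C₂ - t ^ 2 / 2) = 0) :
    C₁ < C₂ := by
  by_contra! hC
  have hleft := integral_comp_sub_sq_half_pos hg hgc hg0 hs₁ hs₁s₂ (hC₂.trans hC)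
  have hright := integral_comp_sub_sq_half_mono hg.monotone hgc hs₂d hC
  have hsplit := integral_add_adjacent_intervals
    (intervalIntegrable_comp_sub_sq_half hgc C₁ s₁ s₂)
    (intervalIntegrable_comp_sub_sq_half hgc C₁ s₂ d)
  linarith

end

theorem stmt_18_general (α ε s₁ s₂ d C₁ C₂ : ℝ) (hε : 0 < ε)
    (hs₁ : 0 < s₁) (hs₁s₂ : s₁ < s₂) (hs₂d : s₂ < d)
    (h hinv : ℝ → ℝ)
    (hh : ∀ γ : ℝ, h γ = γ * Real.exp ((γ ^ 2 - α ^ 2) / (2 * ε)))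
    (hinv_left : Function.LeftInverse hinv h)
    (hinv_right : Function.RightInverse hinv h)
    (hC₁ : (∫ t in s₁..d, hinv (C₁ - t ^ 2 / 2)) = 0)
    (hC₂mem : C₂ ∈ Set.Ioo (s₂ ^ 2 / 2) (d ^ 2 / 2))
    (hC₂ : (∫ t in s₂..d, hinv (C₂ - t ^ 2 / 2)) = 0) :
    C₁ < C₂ := by
  obtain rfl : h = _ := funext hh
  let e := StrictMono.orderIsoOfRightInverse _ (strictMono_mul_exp_sq_sub_div (α ^ 2) hε) hinv
    hinv_right
  have hinv0 : hinv 0 = 0 := by simpa using hinv_left 0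
  exact lt_of_integral_comp_sub_sq_half_eq_zero e.symm.strictMono e.symm.continuous hinv0
    hs₁.le hs₁s₂ hs₂d.le hC₂mem.1.le hC₁ hC₂

theorem stmt_18 (α ε s₁ s₂ d C₁ C₂ : ℝ) (hα : 0 < α) (hε : 0 < ε)
    (hs₁ : 0 < s₁) (hs₁s₂ : s₁ < s₂) (hs₂d : s₂ < d)
    (h hinv : ℝ → ℝ)
    (hh : ∀ γ : ℝ, h γ = γ * Real.exp ((γ ^ 2 - α ^ 2) / (2 * ε)))
    (hinv_left : Function.LeftInverse hinv h)
    (hinv_right : Function.RightInverse hinv h)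
    (hC₁mem : C₁ ∈ Set.Ioo (s₁ ^ 2 / 2) (d ^ 2 / 2))
    (hC₁ : (∫ t in s₁..d, hinv (C₁ - t ^ 2 / 2)) = 0)
    (hC₂mem : C₂ ∈ Set.Ioo (s₂ ^ 2 / 2) (d ^ 2 / 2))
    (hC₂ : (∫ t in s₂..d, hinv (C₂ - t ^ 2 / 2)) = 0) :
    C₁ < C₂ :=
  stmt_18_general α ε s₁ s₂ d C₁ C₂ hε hs₁ hs₁s₂ hs₂d h hinv hh hinv_left hinv_right hC₁ hC₂mem hC₂
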